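/- Each propagation rule ♦_{kn} for n ∈ X is derivable in the system nK + ♦_{4X} using weakening: hence if nK + ♦_{kX} proves Γ then nK + ♦_{4X} proves Γ. -/

import Mathlib

/-! Formulas of modal logic in negation normal form. -/
inductive Formula : Type
  | pos : ℕ → Formula
  | neg : ℕ → Formula
  | and : Formula → Formula → Formula
  | or : Formula → Formula → Formula
  | box : Formula → Formula
  | dia : Formula → Formula
  deriving DecidableEq

namespace Formula

/-- Negation by de Morgan duality. -/
def negf : Formula → Formula
  | pos p => neg p
  | neg p => pos p
  | and A B => or A.negf B.negf
  | or A B => and A.negf B.negf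
  | box A => dia A.negf
  | dia A => box A.negf

/-- The (modal) degree of a formula. -/
def deg : Formula → ℕ
  | pos _ => 0
  | neg _ => 0
  | and A B => A.deg + B.deg
  | or A B => A.deg + B.deg
  | box A => A.deg + 1
  | dia A => A.deg + 1

/-- Implication `A ⊃ B := Ā ∨ B`. -/
def impl (A B : Formula) : Formula := or A.negf B

def bot : Formula := and (pos 0) (neg 0)

/-- `♦ⁿ A`. -/
def diaIter : ℕ → Formula → Formula
  | 0, A => A
  | n+1, A => dia (diaIter n A)

end Formula

/-- Nested sequents: finite multisets of formulas and boxed sequents,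
represented as list-like trees considered up to permutation (`NSeq.Perm`). -/
inductive NSeq : Type
  | nil : NSeq
  | fcons : Formula → NSeq → NSeq
  | bcons : NSeq → NSeq → NSeq

namespace NSeq

/-- Multiset union of nested sequents. -/
def append : NSeq → NSeq → NSeq
  | nil, Δ => Δ
  | fcons A Γ, Δ => fcons A (Γ.append Δ)
  | bcons B Γ, Δ => bcons B (Γ.append Δ)

/-- Multiset-like equivalence of nested sequents (hereditary permutation). -/
inductive Perm : NSeq → NSeq → Prop
  | nil : Perm nil nil
  | fcons (A : Formula) {Γ Δ : NSeq} : Perm Γ Δ → Perm (fcons A Γ) (fcons A Δ)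
  | bcons {B B' Γ Δ : NSeq} : Perm B B' → Perm Γ Δ → Perm (bcons B Γ) (bcons B' Δ)
  | swapff (A B : Formula) (Γ : NSeq) : Perm (fcons A (fcons B Γ)) (fcons B (fcons A Γ))
  | swapfb (A : Formula) (B Γ : NSeq) : Perm (fcons A (bcons B Γ)) (bcons B (fcons A Γ))
  | swapbf (A : Formula) (B Γ : NSeq) : Perm (bcons B (fcons A Γ)) (fcons A (bcons B Γ))
  | swapbb (B C Γ : NSeq) : Perm (bcons B (bcons C Γ)) (bcons C (bcons B Γ))
  | trans {Γ Δ Θ : NSeq} : Perm Γ Δ → Perm Δ Θ → Perm Γ Θ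

/-- The corresponding formula of a nested sequent. -/
def form : NSeq → Formula
  | nil => Formula.bot
  | fcons A Γ => Formula.or A Γ.form
  | bcons B Γ => Formula.or Γ.form (Formula.box B.form)

end NSeq

/-- Contexts: nested sequents with a single hole. -/
inductive Ctx : Type
  | hole : Ctx
  | fcons : Formula → Ctx → Ctx
  | scons : NSeq → Ctx → Ctx
  | binto : Ctx → NSeq → Ctx

namespace Ctx

/-- Filling the hole of a context with a nested sequent. -/
def fill : Ctx → NSeq → NSeq
  | hole, Δ => Δ
  | fcons A C, Δ => NSeq.fcons A (C.fill Δ)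
  | scons S C, Δ => NSeq.bcons S (C.fill Δ)
  | binto C S, Δ => NSeq.bcons (C.fill Δ) S

/-- The depth of a context. -/
def depth : Ctx → ℕ
  | hole => 0
  | fcons _ C => C.depth
  | scons _ C => C.depth
  | binto C _ => C.depth + 1

end Ctx

/-- `nestBox [Δ₁, …, Δₖ] Θ = [Δ₁, [Δ₂, [ … , [Δₖ, Θ'] … ]]]` where the innermost
box contains `Δₖ` together with the box `[Θ]`; i.e. a chain of `k+1` nested boxes
whose `i`-th box contains `Δᵢ` and whose innermost box is `[Θ]`. -/
def nestBox : List NSeq → NSeq → NSeq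
  | [], Θ => NSeq.bcons Θ NSeq.nil
  | Δ :: rest, Θ => NSeq.bcons (Δ.append (nestBox rest Θ)) NSeq.nil

/-- `iterBox n Δ`: `n` nested boxes around `Δ`. -/
def iterBox : ℕ → NSeq → NSeq
  | 0, Δ => Δ
  | n+1, Δ => NSeq.bcons (iterBox n Δ) NSeq.nil

/-- Proofs in the nested sequent system `nK` extended with the propagation rules
`♦ₖₙ` for `n ∈ Xk`, the propagation rules `♦₄ₙ` for `n ∈ X4`, and the cut rule
restricted to cut formulas whose degree satisfies `ρ`.  The index `h` is an upper
bound on the height of the proof. -/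
inductive Prf (Xk X4 : Set ℕ) (ρ : ℕ → Prop) : ℕ → NSeq → Prop
  | id (Γ : Ctx) (p : ℕ) (h : ℕ) :
      Prf Xk X4 ρ h (Γ.fill (NSeq.fcons (.pos p) (NSeq.fcons (.neg p) NSeq.nil)))
  | orR {h : ℕ} (Γ : Ctx) (A B : Formula) :
      Prf Xk X4 ρ h (Γ.fill (NSeq.fcons A (NSeq.fcons B NSeq.nil))) →
      Prf Xk X4 ρ (h+1) (Γ.fill (NSeq.fcons (.or A B) NSeq.nil))
  | andR {h : ℕ} (Γ : Ctx) (A B : Formula) :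
      Prf Xk X4 ρ h (Γ.fill (NSeq.fcons A NSeq.nil)) →
      Prf Xk X4 ρ h (Γ.fill (NSeq.fcons B NSeq.nil)) →
      Prf Xk X4 ρ (h+1) (Γ.fill (NSeq.fcons (.and A B) NSeq.nil))
  | boxR {h : ℕ} (Γ : Ctx) (A : Formula) :
      Prf Xk X4 ρ h (Γ.fill (NSeq.bcons (NSeq.fcons A NSeq.nil) NSeq.nil)) →
      Prf Xk X4 ρ (h+1) (Γ.fill (NSeq.fcons (.box A) NSeq.nil))
  | diaR {h : ℕ} (Γ : Ctx) (A : Formula) (Δ : NSeq) :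
      Prf Xk X4 ρ h (Γ.fill (NSeq.fcons (.dia A) (NSeq.bcons (NSeq.fcons A Δ) NSeq.nil))) →
      Prf Xk X4 ρ (h+1) (Γ.fill (NSeq.fcons (.dia A) (NSeq.bcons Δ NSeq.nil)))
  | propk {h : ℕ} (Γ : Ctx) (A : Formula) (Δs : List NSeq) (Δn : NSeq)
      (hn : Δs.length + 1 ∈ Xk) :
      Prf Xk X4 ρ h (Γ.fill (NSeq.fcons (.dia A) (nestBox Δs (NSeq.fcons A Δn)))) →
      Prf Xk X4 ρ (h+1) (Γ.fill (NSeq.fcons (.dia A) (nestBox Δs Δn)))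
  | prop4 {h : ℕ} (Γ : Ctx) (A : Formula) (Δs : List NSeq) (Δl : NSeq)
      (hn : Δs.length + 2 ∈ X4) :
      Prf Xk X4 ρ h (Γ.fill (NSeq.fcons (.dia A) (nestBox Δs (NSeq.fcons (.dia A) Δl)))) →
      Prf Xk X4 ρ (h+1) (Γ.fill (NSeq.fcons (.dia A) (nestBox Δs Δl)))
  | cut {h : ℕ} (Γ : Ctx) (A : Formula) (hA : ρ A.deg) :
      Prf Xk X4 ρ h (Γ.fill (NSeq.fcons A NSeq.nil)) →
      Prf Xk X4 ρ h (Γ.fill (NSeq.fcons A.negf NSeq.nil)) →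
      Prf Xk X4 ρ (h+1) (Γ.fill NSeq.nil)
  | exch {h : ℕ} {Γ Δ : NSeq} : NSeq.Perm Γ Δ → Prf Xk X4 ρ h Γ → Prf Xk X4 ρ h Δ

/-- No cut formula allowed: the cut-free system. -/
def cutFree : ℕ → Prop := fun _ => False

/-- Unrestricted cut. -/
def cutAll : ℕ → Prop := fun _ => True

/-- Provability (some proof of some height). -/
def Provable (Xk X4 : Set ℕ) (ρ : ℕ → Prop) (Γ : NSeq) : Prop := ∃ h, Prf Xk X4 ρ h Γ

/-- Hilbert-style provability in `K + 4^X`: classical propositional logic,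
axiom k, modus ponens, necessitation, and quasi-transitivity `♦ⁿA ⊃ ♦A` for `n ∈ X`. -/
inductive KProv (X : Set ℕ) : Formula → Prop
  | ax1 (A B : Formula) : KProv X (A.impl (B.impl A))
  | ax2 (A B C : Formula) : KProv X ((A.impl B).impl ((A.impl (B.impl C)).impl (A.impl C)))
  | andI (A B : Formula) : KProv X (A.impl (B.impl (A.and B)))
  | andE1 (A B : Formula) : KProv X ((A.and B).impl A)
  | andE2 (A B : Formula) : KProv X ((A.and B).impl B)
  | orI1 (A B : Formula) : KProv X (A.impl (A.or B))
  | orI2 (A B : Formula) : KProv X (B.impl (A.or B))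
  | orE (A B C : Formula) : KProv X ((A.impl C).impl ((B.impl C).impl ((A.or B).impl C)))
  | negI (A B : Formula) : KProv X ((A.impl B).impl ((A.impl B.negf).impl A.negf))
  | negE (A : Formula) : KProv X (A.negf.negf.impl A)
  | axK (A B : Formula) :
      KProv X ((Formula.box (A.impl B)).impl ((Formula.box A).impl (Formula.box B)))
  | mp {A B : Formula} : KProv X (A.impl B) → KProv X A → KProv X B
  | nec {A : Formula} : KProv X A → KProv X (Formula.box A)
  | path {n : ℕ} (hn : n ∈ X) (A : Formula) :
      KProv X ((Formula.diaIter n A).impl (Formula.dia A))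

/-- The approximations `X_p` of the completion of `X`. -/
def compStep (X : Set ℕ) : ℕ → Set ℕ
  | 0 => X
  | p+1 => compStep X p ∪ {k | ∃ m n, m ∈ compStep X p ∧ n ∈ compStep X p ∧ k = m + n - 1}

/-- The completion `X̂` of `X`. -/
def completion (X : Set ℕ) : Set ℕ := ⋃ p, compStep X p

/-! Weakening is admissible, by induction on derivations: an insertion into the conclusion
`Γ{S}` of a rule either lands in the context `Γ` or at the top level of `S` (then the rule is
applied in a larger context), or inside a box of `S` (then it is pushed into the premises).
With weakening, `♦ₖₙ` is derived for `n > 1`: insert `♦A` in the box at depth `n - 1`, use the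
`♦`-rule there to delete `A` from the box at depth `n`, and delete the inserted `♦A` by `♦₄ₙ`. -/

namespace NSeq

theorem Perm.refl : ∀ Γ : NSeq, Perm Γ Γ
  | .nil => .nil
  | .fcons A Γ => .fcons A (Perm.refl Γ)
  | .bcons B Γ => .bcons (Perm.refl B) (Perm.refl Γ)

theorem Perm.symm {Γ Δ : NSeq} (h : Perm Γ Δ) : Perm Δ Γ := by
  induction h with
  | nil => exact .nil
  | fcons A _ ih => exact .fcons A ih
  | bcons _ _ ih₁ ih₂ => exact .bcons ih₁ ih₂
  | swapff A B Γ => exact .swapff B A Γ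
  | swapfb A B Γ => exact .swapbf A B Γ
  | swapbf A B Γ => exact .swapfb A B Γ
  | swapbb B C Γ => exact .swapbb C B Γ
  | trans _ _ ih₁ ih₂ => exact .trans ih₂ ih₁

theorem Perm.append_left : ∀ (Γ : NSeq) {Δ Δ' : NSeq}, Perm Δ Δ' →
    Perm (Γ.append Δ) (Γ.append Δ')
  | .nil, _, _, h => h
  | .fcons A Γ, _, _, h => .fcons A (Perm.append_left Γ h)
  | .bcons B Γ, _, _, h => .bcons (Perm.refl B) (Perm.append_left Γ h)

theorem perm_middle : ∀ (Γ : NSeq) (B : Formula) (Δ : NSeq),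
    Perm (Γ.append (fcons B Δ)) (fcons B (Γ.append Δ))
  | .nil, _, _ => Perm.refl _
  | .fcons A Γ, B, Δ => .trans (.fcons A (perm_middle Γ B Δ)) (.swapff A B _)
  | .bcons S Γ, B, Δ => .trans (.bcons (Perm.refl S) (perm_middle Γ B Δ)) (.swapbf B S _)

inductive Ins (B : Formula) : NSeq → NSeq → Prop
  | here (Γ : NSeq) : Ins B Γ (fcons B Γ)
  | fcons (A : Formula) {Γ Δ : NSeq} : Ins B Γ Δ → Ins B (fcons A Γ) (fcons A Δ)
  | bconsR {S Γ Δ : NSeq} : Ins B Γ Δ → Ins B (bcons S Γ) (bcons S Δ)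
  | bconsL {S S' Γ : NSeq} : Ins B S S' → Ins B (bcons S Γ) (bcons S' Γ)

/-- An insertion strictly inside one of the boxes of a sequent. -/
inductive InsInBox (B : Formula) : NSeq → NSeq → Prop
  | fcons (A : Formula) {Γ Δ : NSeq} : InsInBox B Γ Δ → InsInBox B (fcons A Γ) (fcons A Δ)
  | bconsR {S Γ Δ : NSeq} : InsInBox B Γ Δ → InsInBox B (bcons S Γ) (bcons S Δ)
  | bconsL {S S' Γ : NSeq} : Ins B S S' → InsInBox B (bcons S Γ) (bcons S' Γ)

variable {B : Formula}

theorem InsInBox.toIns {Γ Δ : NSeq} (h : InsInBox B Γ Δ) : Ins B Γ Δ := by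
  induction h with
  | fcons A _ ih => exact .fcons A ih
  | bconsR _ ih => exact .bconsR ih
  | bconsL h => exact .bconsL h

theorem Ins.perm_or_inBox {Γ Δ : NSeq} (h : Ins B Γ Δ) :
    Perm Δ (NSeq.fcons B Γ) ∨ InsInBox B Γ Δ := by
  induction h with
  | here Γ => exact .inl (Perm.refl _)
  | fcons A _ ih => exact ih.imp (fun hp => (Perm.fcons A hp).trans (.swapff A B _)) (.fcons A)
  | bconsR _ ih =>
      exact ih.imp (fun hp => (Perm.bcons (Perm.refl _) hp).trans (.swapbf B _ _)) .bconsR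
  | bconsL h => exact .inr (.bconsL h)

theorem Ins.append_right {Γ Γ' : NSeq} (h : Ins B Γ Γ') (Δ : NSeq) :
    Ins B (Γ.append Δ) (Γ'.append Δ) := by
  induction h with
  | here Γ => exact .here _
  | fcons A _ ih => exact .fcons A ih
  | bconsR _ ih => exact .bconsR ih
  | bconsL h => exact .bconsL h

theorem Ins.append_left (Γ : NSeq) {Δ Δ' : NSeq} (h : Ins B Δ Δ') :
    Ins B (Γ.append Δ) (Γ.append Δ') := by
  induction Γ with
  | nil => exact h
  | fcons A Γ ih => exact .fcons A ih
  | bcons S Γ _ ih => exact .bconsR ih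

theorem Ins.append_cases : ∀ (Γ : NSeq) {Δ E : NSeq}, Ins B (Γ.append Δ) E →
    (∃ Γ', Ins B Γ Γ' ∧ E = Γ'.append Δ) ∨ (∃ Δ', Ins B Δ Δ' ∧ E = Γ.append Δ') := by
  intro Γ
  induction Γ with
  | nil => intro Δ E h; exact .inr ⟨E, h, rfl⟩
  | fcons A Γ ih =>
      intro Δ E h
      cases h with
      | here => exact .inl ⟨_, .here _, rfl⟩
      | fcons _ h =>
          rcases ih h with ⟨Γ', hi, rfl⟩ | ⟨Δ', hi, rfl⟩
          · exact .inl ⟨_, .fcons A hi, rfl⟩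
          · exact .inr ⟨Δ', hi, rfl⟩
  | bcons S Γ _ ih =>
      intro Δ E h
      cases h with
      | here => exact .inl ⟨_, .here _, rfl⟩
      | bconsR h =>
          rcases ih h with ⟨Γ', hi, rfl⟩ | ⟨Δ', hi, rfl⟩
          · exact .inl ⟨_, .bconsR hi, rfl⟩
          · exact .inr ⟨Δ', hi, rfl⟩
      | bconsL h => exact .inl ⟨_, .bconsL h, rfl⟩

theorem InsInBox.perm {Γ Δ Γ' : NSeq} (hp : Perm Γ Δ) (h : InsInBox B Γ Γ') :
    ∃ Δ', InsInBox B Δ Δ' ∧ Perm Γ' Δ' := by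
  induction hp generalizing Γ' with
  | nil => cases h
  | fcons A _ ih =>
      cases h with
      | fcons _ h =>
          obtain ⟨Δ', hi, hp'⟩ := ih h
          exact ⟨_, .fcons A hi, .fcons A hp'⟩
  | bcons hpS hpΓ ihS ihΓ =>
      cases h with
      | bconsR h =>
          obtain ⟨Δ', hi, hp'⟩ := ihΓ h
          exact ⟨_, .bconsR hi, .bcons hpS hp'⟩
      | bconsL h =>
          rcases h.perm_or_inBox with hp' | h
          · exact ⟨_, .bconsL (.here _), .bcons (hp'.trans (.fcons B hpS)) hpΓ⟩
          · obtain ⟨T', hi, hp'⟩ := ihS h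
            exact ⟨_, .bconsL hi.toIns, .bcons hp' hpΓ⟩
  | swapff A C Γ =>
      cases h with
      | fcons _ h => cases h with
        | fcons _ h => exact ⟨_, .fcons C (.fcons A h), .swapff A C _⟩
  | swapfb A S Γ =>
      cases h with
      | fcons _ h => cases h with
        | bconsR h => exact ⟨_, .bconsR (.fcons A h), .swapfb A S _⟩
        | bconsL h => exact ⟨_, .bconsL h, .swapfb A _ Γ⟩
  | swapbf A S Γ =>
      cases h with
      | bconsR h => cases h with
        | fcons _ h => exact ⟨_, .fcons A (.bconsR h), .swapbf A S _⟩
      | bconsL h => exact ⟨_, .fcons A (.bconsL h), .swapbf A _ Γ⟩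
  | swapbb S T Γ =>
      cases h with
      | bconsR h => cases h with
        | bconsR h => exact ⟨_, .bconsR (.bconsR h), .swapbb S T _⟩
        | bconsL h => exact ⟨_, .bconsL h, .swapbb S _ Γ⟩
      | bconsL h => exact ⟨_, .bconsR (.bconsL h), .swapbb _ T Γ⟩
  | trans _ _ ih₁ ih₂ =>
      obtain ⟨Δ₁, hi₁, hp₁⟩ := ih₁ h
      obtain ⟨Δ₂, hi₂, hp₂⟩ := ih₂ hi₁
      exact ⟨Δ₂, hi₂, hp₁.trans hp₂⟩

theorem Ins.perm {Γ Δ Γ' : NSeq} (hp : Perm Γ Δ) (h : Ins B Γ Γ') :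
    ∃ Δ', Ins B Δ Δ' ∧ Perm Γ' Δ' := by
  rcases h.perm_or_inBox with hp' | h
  · exact ⟨_, .here Δ, hp'.trans (.fcons B hp)⟩
  · obtain ⟨Δ', hi, hp'⟩ := h.perm hp
    exact ⟨Δ', hi.toIns, hp'⟩

end NSeq

namespace Ctx

def comp : Ctx → Ctx → Ctx
  | hole, D => D
  | fcons A C, D => fcons A (C.comp D)
  | scons S C, D => scons S (C.comp D)
  | binto C S, D => binto (C.comp D) S

@[simp]
theorem comp_fill : ∀ (C D : Ctx) (T : NSeq), (C.comp D).fill T = C.fill (D.fill T)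
  | hole, _, _ => rfl
  | fcons A C, D, T => congrArg (NSeq.fcons A) (comp_fill C D T)
  | scons S C, D, T => congrArg (NSeq.bcons S) (comp_fill C D T)
  | binto C S, D, T => congrArg (NSeq.bcons · S) (comp_fill C D T)

/-- The context `Γ, C`. -/
def app : NSeq → Ctx → Ctx
  | .nil, C => C
  | .fcons A Γ, C => fcons A (app Γ C)
  | .bcons S Γ, C => scons S (app Γ C)

@[simp]
theorem app_fill : ∀ (Γ : NSeq) (C : Ctx) (T : NSeq), (app Γ C).fill T = Γ.append (C.fill T)
  | .nil, _, _ => rfl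
  | .fcons A Γ, C, T => congrArg (NSeq.fcons A) (app_fill Γ C T)
  | .bcons S Γ, C, T => congrArg (NSeq.bcons S) (app_fill Γ C T)

theorem fill_perm : ∀ (C : Ctx) {S T : NSeq}, NSeq.Perm S T → NSeq.Perm (C.fill S) (C.fill T)
  | hole, _, _, h => h
  | fcons A C, _, _, h => .fcons A (fill_perm C h)
  | scons S' C, _, _, h => .bcons (NSeq.Perm.refl S') (fill_perm C h)
  | binto C S', _, _, h => .bcons (fill_perm C h) (NSeq.Perm.refl S')

variable {B : Formula}

theorem ins_fill : ∀ (C : Ctx) {T T' : NSeq}, NSeq.Ins B T T' →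
    NSeq.Ins B (C.fill T) (C.fill T')
  | hole, _, _, h => h
  | fcons A C, _, _, h => .fcons A (ins_fill C h)
  | scons _ C, _, _, h => .bconsR (ins_fill C h)
  | binto C _, _, _, h => .bconsL (ins_fill C h)

theorem ins_fill_cases : ∀ (C : Ctx) {S Δ : NSeq}, NSeq.Ins B (C.fill S) Δ →
    (∃ C' : Ctx, NSeq.Perm Δ (C'.fill S) ∧ ∀ T, NSeq.Ins B (C.fill T) (C'.fill T)) ∨
    (∃ S', NSeq.InsInBox B S S' ∧ Δ = C.fill S') := by
  intro C
  induction C with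
  | hole =>
      intro S Δ h
      exact h.perm_or_inBox.imp (fun hp => ⟨fcons B hole, hp, .here⟩) (fun h => ⟨Δ, h, rfl⟩)
  | fcons A C ih =>
      intro S Δ h
      cases h with
      | here => exact .inl ⟨fcons B (fcons A C), NSeq.Perm.refl _, fun _ => .here _⟩
      | fcons _ h =>
          rcases ih h with ⟨C', hp, hC'⟩ | ⟨S', hS', rfl⟩
          · exact .inl ⟨fcons A C', .fcons A hp, fun T => .fcons A (hC' T)⟩
          · exact .inr ⟨S', hS', rfl⟩
  | scons S₀ C ih =>
      intro S Δ h
      cases h with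
      | here => exact .inl ⟨fcons B (scons S₀ C), NSeq.Perm.refl _, fun _ => .here _⟩
      | bconsR h =>
          rcases ih h with ⟨C', hp, hC'⟩ | ⟨S', hS', rfl⟩
          · exact .inl ⟨scons S₀ C', .bcons (NSeq.Perm.refl _) hp, fun T => .bconsR (hC' T)⟩
          · exact .inr ⟨S', hS', rfl⟩
      | bconsL h => exact .inl ⟨scons _ C, NSeq.Perm.refl _, fun _ => .bconsL h⟩
  | binto C S₀ ih =>
      intro S Δ h
      cases h with
      | here => exact .inl ⟨fcons B (binto C S₀), NSeq.Perm.refl _, fun _ => .here _⟩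
      | bconsR h => exact .inl ⟨binto C _, NSeq.Perm.refl _, fun _ => .bconsR h⟩
      | bconsL h =>
          rcases ih h with ⟨C', hp, hC'⟩ | ⟨S', hS', rfl⟩
          · exact .inl ⟨binto C' S₀, .bcons hp (NSeq.Perm.refl _), fun T => .bconsL (hC' T)⟩
          · exact .inr ⟨S', hS', rfl⟩

end Ctx

def nestCtx : List NSeq → Ctx
  | [] => Ctx.binto Ctx.hole NSeq.nil
  | Δ :: rest => Ctx.binto (Ctx.app Δ (nestCtx rest)) NSeq.nil

@[simp]
theorem nestCtx_fill : ∀ (Δs : List NSeq) (Θ : NSeq), (nestCtx Δs).fill Θ = nestBox Δs Θ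
  | [], _ => rfl
  | Δ :: rest, Θ => by simp [nestCtx, Ctx.fill, nestBox, nestCtx_fill rest Θ]

theorem nestBox_append_singleton : ∀ (Δs : List NSeq) (D Θ : NSeq),
    nestBox (Δs ++ [D]) Θ = nestBox Δs (D.append (NSeq.bcons Θ NSeq.nil))
  | [], _, _ => rfl
  | Δ :: rest, D, Θ => by simp [nestBox, nestBox_append_singleton rest D Θ]

theorem NSeq.InsInBox.nestBox_cases {B : Formula} : ∀ {Δs : List NSeq} {Θ N : NSeq},
    InsInBox B (nestBox Δs Θ) N →
    ∃ Δs' Θ', Δs'.length = Δs.length ∧ Perm N (nestBox Δs' Θ') ∧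
      ∀ X, Ins B (nestBox Δs (NSeq.fcons X Θ)) (nestBox Δs' (NSeq.fcons X Θ'))
  | [], Θ, _, .bconsL h => ⟨[], _, rfl, Perm.refl _, fun X => .bconsL (.fcons X h)⟩
  | Δ :: rest, Θ, _, .bconsL h => by
      rcases Ins.append_cases Δ h with ⟨Δ', hi, rfl⟩ | ⟨M, hi, rfl⟩
      · exact ⟨Δ' :: rest, Θ, rfl, Perm.refl _, fun X => .bconsL (hi.append_right _)⟩
      rcases hi.perm_or_inBox with hp | hi
      · refine ⟨NSeq.fcons B Δ :: rest, Θ, rfl, .bcons ?_ (Perm.refl _), fun X => .bconsL (.here _)⟩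
        exact (Perm.append_left Δ hp).trans (perm_middle Δ B _)
      · obtain ⟨rest', Θ', hlen, hp, hins⟩ := hi.nestBox_cases
        exact ⟨Δ :: rest', Θ', by simp [hlen], .bcons (Perm.append_left Δ hp) (Perm.refl _),
          fun X => .bconsL (Ins.append_left Δ (hins X))⟩

namespace Prf

variable {Xk X4 : Set ℕ} {ρ : ℕ → Prop}

theorem weaken {B : Formula} {h : ℕ} {Γ : NSeq} (hp : Prf Xk X4 ρ h Γ) :
    ∀ {Δ : NSeq}, NSeq.Ins B Γ Δ → Prf Xk X4 ρ h Δ := by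
  induction hp with
  | id C p h =>
      intro Δ hΔ
      rcases C.ins_fill_cases hΔ with ⟨C', hp, -⟩ | ⟨S', hS', rfl⟩
      · exact .exch hp.symm (.id C' p h)
      · nomatch hS'
  | orR C A A' _ ih =>
      intro Δ hΔ
      rcases C.ins_fill_cases hΔ with ⟨C', hp, hC'⟩ | ⟨S', hS', rfl⟩
      · exact .exch hp.symm (.orR C' A A' (ih (hC' _)))
      · nomatch hS'
  | andR C A A' _ _ ih₁ ih₂ =>
      intro Δ hΔ
      rcases C.ins_fill_cases hΔ with ⟨C', hp, hC'⟩ | ⟨S', hS', rfl⟩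
      · exact .exch hp.symm (.andR C' A A' (ih₁ (hC' _)) (ih₂ (hC' _)))
      · nomatch hS'
  | boxR C A _ ih =>
      intro Δ hΔ
      rcases C.ins_fill_cases hΔ with ⟨C', hp, hC'⟩ | ⟨S', hS', rfl⟩
      · exact .exch hp.symm (.boxR C' A (ih (hC' _)))
      · nomatch hS'
  | diaR C A Θ _ ih =>
      intro Δ hΔ
      rcases C.ins_fill_cases hΔ with ⟨C', hp, hC'⟩ | ⟨S', ⟨_, hN⟩, rfl⟩
      · exact .exch hp.symm (.diaR C' A Θ (ih (hC' _)))
      · cases hN with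
        | bconsR hN => nomatch hN
        | bconsL hΘ => exact .diaR C A _ (ih (C.ins_fill (.fcons _ (.bconsL (.fcons A hΘ)))))
  | propk C A Δs Θ hn _ ih =>
      intro Δ hΔ
      rcases C.ins_fill_cases hΔ with ⟨C', hp, hC'⟩ | ⟨S', ⟨_, hN⟩, rfl⟩
      · exact .exch hp.symm (.propk C' A Δs Θ hn (ih (hC' _)))
      · obtain ⟨Δs', Θ', hlen, hp, hins⟩ := hN.nestBox_cases
        exact .exch (C.fill_perm (.fcons _ hp.symm))
          (.propk C A Δs' Θ' (hlen ▸ hn) (ih (C.ins_fill (.fcons _ (hins A)))))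
  | prop4 C A Δs Θ hn _ ih =>
      intro Δ hΔ
      rcases C.ins_fill_cases hΔ with ⟨C', hp, hC'⟩ | ⟨S', ⟨_, hN⟩, rfl⟩
      · exact .exch hp.symm (.prop4 C' A Δs Θ hn (ih (hC' _)))
      · obtain ⟨Δs', Θ', hlen, hp, hins⟩ := hN.nestBox_cases
        exact .exch (C.fill_perm (.fcons _ hp.symm))
          (.prop4 C A Δs' Θ' (hlen ▸ hn) (ih (C.ins_fill (.fcons _ (hins (.dia A))))))
  | cut C A hA _ _ ih₁ ih₂ =>
      intro Δ hΔ
      rcases C.ins_fill_cases hΔ with ⟨C', hp, hC'⟩ | ⟨S', hS', rfl⟩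
      · exact .exch hp.symm (.cut C' A hA (ih₁ (hC' _)) (ih₂ (hC' _)))
      · nomatch hS'
  | exch hperm _ ih =>
      intro Δ hΔ
      obtain ⟨Δ₀, hi, hp⟩ := hΔ.perm hperm.symm
      exact .exch hp.symm (ih hi)

theorem succ {h : ℕ} {Γ : NSeq} (hp : Prf Xk X4 ρ h Γ) : Prf Xk X4 ρ (h + 1) Γ := by
  induction hp with
  | id C p h => exact .id C p (h + 1)
  | orR C A B _ ih => exact .orR C A B ih
  | andR C A B _ _ ih₁ ih₂ => exact .andR C A B ih₁ ih₂
  | boxR C A _ ih => exact .boxR C A ih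
  | diaR C A Δ _ ih => exact .diaR C A Δ ih
  | propk C A Δs Δn hn _ ih => exact .propk C A Δs Δn hn ih
  | prop4 C A Δs Δl hn _ ih => exact .prop4 C A Δs Δl hn ih
  | cut C A hA _ _ ih₁ ih₂ => exact .cut C A hA ih₁ ih₂
  | exch hperm _ ih => exact .exch hperm ih

theorem propk_via_prop4 {Γ : Ctx} {A : Formula} {Δs : List NSeq} {Δn : NSeq} {h : ℕ}
    (hn : Δs.length + 1 ∈ X4) (hΔs : Δs ≠ [])
    (hp : Prf Xk X4 ρ h (Γ.fill (NSeq.fcons (.dia A) (nestBox Δs (NSeq.fcons A Δn))))) :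
    Prf Xk X4 ρ (h + 2) (Γ.fill (NSeq.fcons (.dia A) (nestBox Δs Δn))) := by
  obtain ⟨L, D, rfl⟩ := List.eq_nil_or_concat' Δs |>.resolve_left hΔs
  set C : Ctx := Γ.comp (.fcons (.dia A) (nestCtx L))
  have hC : ∀ T, C.fill T = Γ.fill (NSeq.fcons (.dia A) (nestBox L T)) := by simp [C, Ctx.fill]
  rw [nestBox_append_singleton, ← hC] at hp ⊢
  have hD : ∀ T, (C.comp (.app D .hole)).fill T = C.fill (D.append T) := by simp [Ctx.fill]
  have hweak := hp.weaken (C.ins_fill (NSeq.Ins.append_left D (.here (B := .dia A) _)))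
  rw [← hD] at hweak
  have hdia := Prf.diaR _ A Δn hweak
  rw [hD] at hdia
  have hfront := Prf.exch (C.fill_perm (NSeq.perm_middle D (.dia A) _)) hdia
  rw [hC] at hfront ⊢
  simpa using Prf.prop4 Γ A L _ (by simpa using hn) hfront

theorem elim_propk (hXk : Xk ⊆ {n | 1 < n}) {h : ℕ} {Γ : NSeq} (hp : Prf Xk X4 ρ h Γ) :
    Prf ∅ (Xk ∪ X4) ρ (2 * h) Γ := by
  induction hp with
  | id C p h => exact .id C p _
  | orR C A B _ ih => exact (Prf.orR C A B ih).succ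
  | andR C A B _ _ ih₁ ih₂ => exact (Prf.andR C A B ih₁ ih₂).succ
  | boxR C A _ ih => exact (Prf.boxR C A ih).succ
  | diaR C A Δ _ ih => exact (Prf.diaR C A Δ ih).succ
  | propk C A Δs Δn hn _ ih =>
      exact ih.propk_via_prop4 (.inl hn) (List.ne_nil_of_length_pos (by simpa using hXk hn))
  | prop4 C A Δs Δl hn _ ih => exact (Prf.prop4 C A Δs Δl (.inr hn) ih).succ
  | cut C A hA _ _ ih₁ ih₂ => exact (Prf.cut C A hA ih₁ ih₂).succ
  | exch hperm _ ih => exact .exch hperm ih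

end Prf

/-- Each propagation rule `♦ₖₙ` for `n ∈ X` is admissible in `nK + ♦₄X`;
hence every sequent provable in `nK + ♦ₖX` is provable in `nK + ♦₄X`. -/
theorem propk_to_prop4 (X : Set ℕ) (hX : X ⊆ {n : ℕ | 1 < n}) :
    (∀ n ∈ X, ∀ (Γ : Ctx) (A : Formula) (Δs : List NSeq) (Δn : NSeq),
      Δs.length + 1 = n →
      Provable ∅ X cutFree (Γ.fill (NSeq.fcons (.dia A) (nestBox Δs (NSeq.fcons A Δn)))) →
      Provable ∅ X cutFree (Γ.fill (NSeq.fcons (.dia A) (nestBox Δs Δn)))) ∧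
    (∀ Γ : NSeq, Provable X ∅ cutFree Γ → Provable ∅ X cutFree Γ) := by
  refine ⟨?_, ?_⟩
  · rintro n hn Γ A Δs Δn rfl ⟨h, hp⟩
    have hΔs : Δs ≠ [] := List.ne_nil_of_length_pos (by simpa using hX hn)
    exact ⟨h + 2, hp.propk_via_prop4 hn hΔs⟩
  · rintro Γ ⟨h, hp⟩
    exact ⟨2 * h, by simpa using hp.elim_propk hX⟩
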